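/- With the setup in the context, define for x > 0: ρ1(x) = Σ_{k=1}^{n−2} |v_{n−2−k}| x^{−k} and ρ2(x) = |γ| x^{−1} + Σ_{k=2}^{n−1} |w_{n−1−k}| x^{−k}. Then for every x > 0 and every zero z of p, at least one of the following holds: |z²| ≤ x², or |z² − α| ≤ ρ1(x), or |z² − β| ≤ ρ2(x). -/

import Mathlib

/-!
Put `t = z²`. Padding `p` to the even degree `n` (multiplying by `z` if `ℓ` is odd) gives
`z^n + Σ a_i z^i = 0`, and this says that `(ψ, tψ, …, t^{m-1}ψ)` with `ψ = (1, z) S` is a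
left eigenvector, for the eigenvalue `t`, of the block companion matrix with blocks `S⁻¹ A_j S`.
Scale its coordinates by `x^{-i}` and look at a largest one. If it is not among the last two,
the coordinate two places further is `t` times it, so `|t| ≤ x²`; otherwise the eigen-equation
in that column is a Gershgorin row inequality, and the last block being triangular gives the
radii `ρ1(x)` and `ρ2(x)`.
-/

open Polynomial Finset Matrix

section Sums

variable {M : Type*} [AddCommMonoid M]

theorem sum_range_two_mul (f : ℕ → M) (m : ℕ) :
    ∑ i ∈ range (2 * m), f i = ∑ j ∈ range m, (f (2 * j) + f (2 * j + 1)) := by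
  induction m with
  | zero => simp
  | succ k ih => rw [Nat.mul_succ, sum_range_succ, sum_range_succ, sum_range_succ, ih, add_assoc]

theorem sum_Icc_reflect (F : ℕ → ℕ → M) (a N : ℕ) :
    ∑ k ∈ Icc a N, F (N - k) k = ∑ i ∈ range (N + 1 - a), F i (N - i) := by
  refine sum_nbij' (N - ·) (N - ·) ?_ ?_ ?_ ?_ ?_ <;> intro k hk <;>
    simp only [mem_Icc, mem_range] at hk ⊢
  all_goals first | omega | rw [Nat.sub_sub_self hk.2]

end Sums

section MonicEval

variable {R : Type*} [CommRing R]

def monicEval (c : ℕ → R) (d : ℕ) (z : R) : R := z ^ d + ∑ i ∈ range d, c i * z ^ i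

theorem eval_eq_monicEval (c : ℕ → R) (d : ℕ) (z : R) :
    (X ^ d + ∑ i ∈ range d, C (c i) * X ^ i).eval z = monicEval c d z := by
  simp [monicEval, eval_finsetSum]

theorem monicEval_succ_of_shift {a b : ℕ → R} {d : ℕ} (h0 : a 0 = 0)
    (hab : ∀ j, 1 ≤ j → j < d + 1 → a j = b (j - 1)) (z : R) :
    monicEval a (d + 1) z = z * monicEval b d z := by
  have hsum : ∑ i ∈ range d, a (i + 1) * z ^ (i + 1) = z * ∑ i ∈ range d, b i * z ^ i := by
    rw [mul_sum]
    refine sum_congr rfl fun i hi => ?_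
    rw [hab (i + 1) (by omega) (by simp at hi; omega), Nat.add_sub_cancel]
    ring
  rw [monicEval, monicEval, sum_range_succ', hsum, h0]
  ring

theorem monicEval_padded {ℓ n : ℕ} (hn : n = 2 * ((ℓ + 1) / 2)) {a b : ℕ → R}
    (haeven : Even ℓ → ∀ j, j < n → a j = b j)
    (haodd : ¬ Even ℓ → a 0 = 0 ∧ ∀ j, 1 ≤ j → j < n → a j = b (j - 1)) (z : R) :
    monicEval a n z = z ^ (n - ℓ) * monicEval b ℓ z := by
  by_cases he : Even ℓ
  · obtain rfl : n = ℓ := by obtain ⟨r, rfl⟩ := he; omega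
    rw [Nat.sub_self, pow_zero, one_mul, monicEval, monicEval]
    congr 1
    exact sum_congr rfl fun i hi => by rw [haeven he i (mem_range.mp hi)]
  · obtain rfl : n = ℓ + 1 := by
      rw [Nat.not_even_iff_odd] at he; obtain ⟨r, rfl⟩ := he; omega
    obtain ⟨h0, hab⟩ := haodd he
    rw [Nat.add_sub_cancel_left, pow_one]
    exact monicEval_succ_of_shift h0 hab z

end MonicEval

section CompanionBlock

variable {R : Type*} [CommRing R]

/-- The paper's block `A_j`, with `c` for `a_{n-1}` and the convention `a_{-1} = 0`. -/
def companionBlock (a : ℕ → R) (c : R) (j : ℕ) : Matrix (Fin 2) (Fin 2) R :=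
  !![-a (2 * j), c * a (2 * j) - if j = 0 then 0 else a (2 * j - 1);
     -a (2 * j + 1), c * a (2 * j + 1) - a (2 * j)]

theorem eq_companionBlock {A : ℕ → Matrix (Fin 2) (Fin 2) R} {a : ℕ → R} {c : R} {m : ℕ}
    (hA0 : A 0 = !![-(a 0), c * a 0; -(a 1), c * a 1 - a 0])
    (hA : ∀ j, 1 ≤ j → j ≤ m - 1 →
      A j = !![-(a (2 * j)), c * a (2 * j) - a (2 * j - 1);
               -(a (2 * j + 1)), c * a (2 * j + 1) - a (2 * j)])
    {j : ℕ} (hj : j < m) : A j = companionBlock a c j := by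
  rcases j with _ | j
  · simp [hA0, companionBlock]
  · simp [hA (j + 1) (by omega) (by omega), companionBlock]

theorem sum_pow_smul_vecMul_companionBlock (a : ℕ → R) (c z : R) (k : ℕ) :
    ∑ j ∈ range (k + 1), (z ^ 2) ^ j • (![1, z] ᵥ* companionBlock a c j) =
      ![-∑ i ∈ range (2 * k + 2), a i * z ^ i,
        c * ∑ i ∈ range (2 * k + 2), a i * z ^ i
          - z * ∑ i ∈ range (2 * k + 1), a i * z ^ i] := by
  induction k with
  | zero =>
    ext i; fin_cases i <;>
      simp only [companionBlock, sum_range_succ, sum_range_zero, zero_add, ↓reduceIte,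
        Fin.zero_eta, Fin.mk_one, cons_val_zero, cons_val_one, cons_val_fin_one, Finset.sum_apply,
        vecMul_cons, head_cons, tail_cons, one_smul, smul_cons, smul_eq_mul, Matrix.smul_empty,
        empty_vecMul, add_zero, add_cons, empty_add_empty] <;> ring
  | succ k ih =>
    have hQ : ∑ i ∈ range (2 * (k + 1) + 2), a i * z ^ i =
        ∑ i ∈ range (2 * k + 2), a i * z ^ i
          + a (2 * k + 2) * z ^ (2 * k + 2) + a (2 * k + 3) * z ^ (2 * k + 3) := by
      rw [show 2 * (k + 1) + 2 = 2 * k + 2 + 1 + 1 by ring, sum_range_succ, sum_range_succ]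
    have hQ' : ∑ i ∈ range (2 * (k + 1) + 1), a i * z ^ i =
        ∑ i ∈ range (2 * k + 1), a i * z ^ i
          + a (2 * k + 1) * z ^ (2 * k + 1) + a (2 * k + 2) * z ^ (2 * k + 2) := by
      rw [show 2 * (k + 1) + 1 = 2 * k + 1 + 1 + 1 by ring, sum_range_succ, sum_range_succ]
    rw [sum_range_succ, ih, hQ, hQ']
    generalize ∑ i ∈ range (2 * k + 2), a i * z ^ i = Q
    generalize ∑ i ∈ range (2 * k + 1), a i * z ^ i = Q'
    ext i; fin_cases i <;>
      simp only [companionBlock, show 2 * (k + 1) = 2 * k + 2 by ring, Nat.add_eq_zero_iff,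
        one_ne_zero, and_false, ↓reduceIte, Nat.add_one_sub_one,
        Fin.zero_eta, Fin.mk_one, cons_val_zero, cons_val_one, cons_val_fin_one, Pi.add_apply,
        vecMul_cons, head_cons, tail_cons, one_smul, smul_cons, smul_eq_mul, Matrix.smul_empty,
        empty_vecMul, add_zero, add_cons, empty_add_empty] <;> ring

theorem sum_pow_smul_vecMul_companionBlock_of_root {a : ℕ → R} {z : R} {k : ℕ}
    (hz : monicEval a (2 * k + 2) z = 0) :
    ∑ j ∈ range (k + 1), (z ^ 2) ^ j • (![1, z] ᵥ* companionBlock a (a (2 * k + 1)) j) =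
      (z ^ 2) ^ (k + 1) • ![1, z] := by
  have hsplit := sum_range_succ (fun i => a i * z ^ i) (2 * k + 1)
  rw [monicEval] at hz
  rw [sum_pow_smul_vecMul_companionBlock, ← pow_mul]
  ext i; fin_cases i <;>
    simp only [Fin.zero_eta, Fin.mk_one, cons_val_zero, cons_val_one, cons_val_fin_one,
      Pi.smul_apply, smul_eq_mul, mul_one]
  · linear_combination -hz
  · linear_combination (a (2 * k + 1) - z) * hz + z * hsplit

end CompanionBlock

theorem sum_smul_vecMul_conj {ι κ R : Type*} [Fintype ι] [DecidableEq ι] [CommRing R]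
    {S : Matrix ι ι R} (hS : IsUnit S) (v : ι → R) (s : Finset κ) (c : κ → R)
    (A : κ → Matrix ι ι R) :
    ∑ j ∈ s, c j • ((v ᵥ* S) ᵥ* (S⁻¹ * A j * S)) =
      (∑ j ∈ s, c j • (v ᵥ* A j)) ᵥ* S := by
  rw [sum_vecMul]
  refine sum_congr rfl fun j _ => ?_
  rw [smul_vecMul, vecMul_vecMul, vecMul_vecMul, ← Matrix.mul_assoc,
    mul_nonsing_inv_cancel_left _ _ ((isUnit_iff_isUnit_det S).mp hS)]

section BlockVec

variable {R : Type*} [CommRing R] (t : R) (ψ : Fin 2 → R)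

def blockVec : ℕ → R
  | 0 => ψ 0
  | 1 => ψ 1
  | i + 2 => t * blockVec i

theorem blockVec_two_mul (j : ℕ) : blockVec t ψ (2 * j) = t ^ j * ψ 0 := by
  induction j with
  | zero => simp [blockVec]
  | succ j ih => rw [Nat.mul_succ, blockVec, ih, pow_succ]; ring

theorem blockVec_two_mul_add_one (j : ℕ) : blockVec t ψ (2 * j + 1) = t ^ j * ψ 1 := by
  induction j with
  | zero => simp [blockVec]
  | succ j ih =>
    rw [Nat.mul_succ, show 2 * j + 2 + 1 = 2 * j + 1 + 2 by ring, blockVec, ih, pow_succ]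
    ring

theorem sum_range_two_mul_mul_blockVec (c : ℕ → R) (m : ℕ) :
    ∑ i ∈ range (2 * m), c i * blockVec t ψ i =
      ∑ j ∈ range m, t ^ j * (ψ 0 * c (2 * j) + ψ 1 * c (2 * j + 1)) := by
  rw [sum_range_two_mul]
  refine sum_congr rfl fun j _ => ?_
  rw [blockVec_two_mul, blockVec_two_mul_add_one]
  ring

end BlockVec

section Gershgorin

variable {𝕜 : Type*} [NormedField 𝕜] {x : ℝ}

theorem exists_dominant_index {u : ℕ → 𝕜} (hx : 0 < x) {N j : ℕ} (hj : j < N)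
    (huj : u j ≠ 0) :
    ∃ i₀ < N, u i₀ ≠ 0 ∧ ∀ i < N, ‖u i‖ / x ^ i ≤ ‖u i₀‖ / x ^ i₀ := by
  obtain ⟨i₀, hi₀, hmax⟩ :=
    exists_max_image (range N) (fun i => ‖u i‖ / x ^ i) ⟨j, mem_range.mpr hj⟩
  refine ⟨i₀, mem_range.mp hi₀, fun h0 => ?_, fun i hi => hmax i (mem_range.mpr hi)⟩
  have := hmax j (mem_range.mpr hj)
  rw [h0, norm_zero, zero_div] at this
  exact (div_pos (norm_pos_iff.mpr huj) (pow_pos hx j)).not_ge this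

theorem norm_le_sq_of_dominant {u : ℕ → 𝕜} {t : 𝕜} (hx : 0 < x) {i : ℕ} (hi : u i ≠ 0)
    (hshift : u (i + 2) = t * u i) (hdom : ‖u (i + 2)‖ / x ^ (i + 2) ≤ ‖u i‖ / x ^ i) :
    ‖t‖ ≤ x ^ 2 := by
  have hpos : 0 < ‖u i‖ / x ^ i := div_pos (norm_pos_iff.mpr hi) (pow_pos hx i)
  have hscale : ‖u (i + 2)‖ / x ^ (i + 2) = ‖t‖ / x ^ 2 * (‖u i‖ / x ^ i) := by
    rw [hshift, norm_mul, pow_add]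
    ring
  rw [hscale, mul_le_iff_le_one_left hpos, div_le_one (pow_pos hx 2)] at hdom
  exact hdom

theorem norm_le_sum_div_pow_of_dominant {u c : ℕ → 𝕜} {μ : 𝕜} (hx : 0 < x) {N : ℕ}
    (hN : u N ≠ 0) (hdom : ∀ i < N, ‖u i‖ / x ^ i ≤ ‖u N‖ / x ^ N)
    (h : μ * u N = ∑ i ∈ range N, c i * u i) :
    ‖μ‖ ≤ ∑ i ∈ range N, ‖c i‖ / x ^ (N - i) := by
  have hpos : 0 < ‖u N‖ := norm_pos_iff.mpr hN
  have hterm : ∀ i ∈ range N, ‖c i * u i‖ ≤ ‖u N‖ * (‖c i‖ / x ^ (N - i)) := by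
    intro i hi
    have hiN := mem_range.mp hi
    have hu : ‖u i‖ ≤ ‖u N‖ / x ^ (N - i) := by
      have hsplit : ‖u N‖ / x ^ N = ‖u N‖ / x ^ (N - i) / x ^ i := by
        rw [div_div, ← pow_add, Nat.sub_add_cancel hiN.le]
      have := hdom i hiN
      rwa [hsplit, div_le_div_iff_of_pos_right (pow_pos hx i)] at this
    calc ‖c i * u i‖ = ‖c i‖ * ‖u i‖ := norm_mul _ _
      _ ≤ ‖c i‖ * (‖u N‖ / x ^ (N - i)) := mul_le_mul_of_nonneg_left hu (norm_nonneg _)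
      _ = ‖u N‖ * (‖c i‖ / x ^ (N - i)) := by ring
  refine le_of_mul_le_mul_right ?_ hpos
  calc ‖μ‖ * ‖u N‖ = ‖∑ i ∈ range N, c i * u i‖ := by rw [← norm_mul, h]
    _ ≤ ∑ i ∈ range N, ‖c i * u i‖ := norm_sum_le _ _
    _ ≤ ∑ i ∈ range N, ‖u N‖ * (‖c i‖ / x ^ (N - i)) := sum_le_sum hterm
    _ = (∑ i ∈ range N, ‖c i‖ / x ^ (N - i)) * ‖u N‖ := by rw [← mul_sum, mul_comm]

variable {t α β γ : 𝕜} {v w : ℕ → 𝕜} {ψ : Fin 2 → 𝕜} {k : ℕ}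

theorem sub_mul_blockVec_eq_sum
    (heig : ∑ j ∈ range (k + 1),
        t ^ j • (ψ ᵥ* !![v (2 * j), w (2 * j); v (2 * j + 1), w (2 * j + 1)])
      + t ^ (k + 1) • (ψ ᵥ* !![α, γ; 0, β]) = t ^ (k + 2) • ψ) :
    (t - α) * blockVec t ψ (2 * k + 2) = ∑ i ∈ range (2 * k + 2), v i * blockVec t ψ i ∧
      (t - β) * blockVec t ψ (2 * k + 3) =
        ∑ i ∈ range (2 * k + 3), Function.update w (2 * k + 2) γ i * blockVec t ψ i := by
  have h0 := congrFun heig 0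
  have h1 := congrFun heig 1
  simp only [Finset.sum_apply, Pi.add_apply, Pi.smul_apply, smul_eq_mul, vecMul_cons, vecHead,
    vecTail, smul_cons, Matrix.smul_empty, empty_vecMul, add_zero, add_cons, empty_add_empty,
    cons_val_zero, cons_val_one, cons_val_fin_one, mul_zero, Function.comp_apply,
    Fin.succ_zero_eq_one] at h0 h1
  have hw : ∑ i ∈ range (2 * k + 3), Function.update w (2 * k + 2) γ i * blockVec t ψ i =
      ∑ i ∈ range (2 * k + 2), w i * blockVec t ψ i + γ * blockVec t ψ (2 * k + 2) := by
    rw [sum_range_succ, Function.update_self]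
    congr 1
    exact sum_congr rfl fun i hi => by rw [Function.update_of_ne (mem_range.mp hi).ne]
  have hu₀ : blockVec t ψ (2 * k + 2) = t ^ (k + 1) * ψ 0 := blockVec_two_mul t ψ (k + 1)
  have hu₁ : blockVec t ψ (2 * k + 3) = t ^ (k + 1) * ψ 1 :=
    blockVec_two_mul_add_one t ψ (k + 1)
  rw [hw, hu₀, hu₁, show 2 * k + 2 = 2 * (k + 1) by ring, sum_range_two_mul_mul_blockVec,
    sum_range_two_mul_mul_blockVec]
  constructor
  · linear_combination -h0
  · linear_combination -h1

theorem block_gershgorin_trichotomy (hψ : ψ ≠ 0)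
    (heig : ∑ j ∈ range (k + 1),
        t ^ j • (ψ ᵥ* !![v (2 * j), w (2 * j); v (2 * j + 1), w (2 * j + 1)])
      + t ^ (k + 1) • (ψ ᵥ* !![α, γ; 0, β]) = t ^ (k + 2) • ψ) (hx : 0 < x) :
    ‖t‖ ≤ x ^ 2 ∨
      ‖t - α‖ ≤ ∑ i ∈ range (2 * k + 2), ‖v i‖ / x ^ (2 * k + 2 - i) ∨
      ‖t - β‖ ≤ ‖γ‖ / x +
        ∑ i ∈ range (2 * k + 2), ‖w i‖ / x ^ (2 * k + 3 - i) := by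
  obtain ⟨hrow₀, hrow₁⟩ := sub_mul_blockVec_eq_sum heig
  obtain ⟨j, hj⟩ : ∃ j < 2 * k + 4, blockVec t ψ j ≠ 0 := by
    obtain ⟨i, hi⟩ := Function.ne_iff.mp hψ
    fin_cases i
    exacts [⟨0, by omega, hi⟩, ⟨1, by omega, hi⟩]
  obtain ⟨i₀, hi₀, hne, hdom⟩ := exists_dominant_index hx hj.1 hj.2
  rcases (by omega : i₀ + 2 < 2 * k + 4 ∨ i₀ = 2 * k + 2 ∨ i₀ = 2 * k + 3)
    with h | rfl | rfl
  · exact Or.inl (norm_le_sq_of_dominant hx hne rfl (hdom _ h))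
  · exact Or.inr (Or.inl
      (norm_le_sum_div_pow_of_dominant hx hne (fun i _ => hdom i (by omega)) hrow₀))
  · refine Or.inr (Or.inr ?_)
    have := norm_le_sum_div_pow_of_dominant hx hne (fun i _ => hdom i (by omega)) hrow₁
    rw [sum_range_succ, Function.update_self, show 2 * k + 3 - (2 * k + 2) = 1 by omega, pow_one,
      add_comm] at this
    convert this using 2
    exact sum_congr rfl fun i hi => by rw [Function.update_of_ne (mem_range.mp hi).ne]

end Gershgorin

theorem gershgorin_union_rho
    (ℓ : ℕ) (hℓ : 3 ≤ ℓ) (b : ℕ → ℂ) (p : Polynomial ℂ)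
    (hp : p = X ^ ℓ + ∑ i ∈ Finset.range ℓ, C (b i) * X ^ i)
    (m n : ℕ) (hm : m = (ℓ + 1) / 2) (hn : n = 2 * m)
    (a : ℕ → ℂ)
    (haeven : Even ℓ → ∀ j, j < n → a j = b j)
    (haodd : ¬ Even ℓ → a 0 = 0 ∧ ∀ j, 1 ≤ j → j < n → a j = b (j - 1))
    (A : ℕ → Matrix (Fin 2) (Fin 2) ℂ)
    (hA0 : A 0 = !![-(a 0), a (n - 1) * a 0; -(a 1), a (n - 1) * a 1 - a 0])
    (hA : ∀ j, 1 ≤ j → j ≤ m - 1 →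
      A j = !![-(a (2 * j)), a (n - 1) * a (2 * j) - a (2 * j - 1);
               -(a (2 * j + 1)), a (n - 1) * a (2 * j + 1) - a (2 * j)])
    (S : Matrix (Fin 2) (Fin 2) ℂ) (hS : IsUnit S)
    (α β γ : ℂ)
    (htri : S⁻¹ * A (m - 1) * S = !![α, γ; 0, β])
    (v w : ℕ → ℂ)
    (hvw : ∀ j, j ≤ m - 2 →
      S⁻¹ * A j * S = !![v (2 * j), w (2 * j); v (2 * j + 1), w (2 * j + 1)])
    (ρ1 ρ2 : ℝ → ℝ)
    (hρ1 : ∀ x : ℝ, 0 < x →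
      ρ1 x = ∑ k ∈ Finset.Icc 1 (n - 2), ‖v (n - 2 - k)‖ / x ^ k)
    (hρ2 : ∀ x : ℝ, 0 < x →
      ρ2 x = ‖γ‖ / x + ∑ k ∈ Finset.Icc 2 (n - 1), ‖w (n - 1 - k)‖ / x ^ k)
    : ∀ x : ℝ, 0 < x → ∀ z : ℂ, p.eval z = 0 →
      ‖z ^ 2‖ ≤ x ^ 2 ∨ ‖z ^ 2 - α‖ ≤ ρ1 x ∨
        ‖z ^ 2 - β‖ ≤ ρ2 x := by
  intro x hx z hz
  obtain ⟨k, rfl⟩ : ∃ k, m = k + 2 := ⟨m - 2, by omega⟩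
  subst hn
  rw [show 2 * (k + 2) - 1 = 2 * (k + 1) + 1 by omega] at hA0 hA
  rw [show k + 2 - 1 = k + 1 by omega] at htri
  have hroot : monicEval a (2 * (k + 1) + 2) z = 0 := by
    rw [hp, eval_eq_monicEval] at hz
    rw [show 2 * (k + 1) + 2 = 2 * (k + 2) by ring, monicEval_padded (by omega) haeven haodd, hz,
      mul_zero]
  have hψ : ![1, z] ᵥ* S ≠ 0 := fun h =>
    one_ne_zero (congrFun (vecMul_injective_of_isUnit hS (h.trans (zero_vecMul S).symm)) 0)
  have heig : ∑ j ∈ range (k + 2), (z ^ 2) ^ j • ((![1, z] ᵥ* S) ᵥ* (S⁻¹ * A j * S)) =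
      (z ^ 2) ^ (k + 2) • (![1, z] ᵥ* S) := by
    rw [sum_smul_vecMul_conj hS, sum_congr rfl fun j hj => by
      rw [eq_companionBlock hA0 hA (mem_range.mp hj)],
      sum_pow_smul_vecMul_companionBlock_of_root hroot, smul_vecMul]
  rw [sum_range_succ, htri,
    sum_congr rfl fun j hj => by rw [hvw j (by have := mem_range.mp hj; omega)]] at heig
  have hρ1' : ρ1 x = ∑ i ∈ range (2 * k + 2), ‖v i‖ / x ^ (2 * k + 2 - i) := by
    rw [hρ1 x hx, show 2 * (k + 2) - 2 = 2 * k + 2 by omega]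
    exact sum_Icc_reflect (fun i j => ‖v i‖ / x ^ j) 1 (2 * k + 2)
  have hρ2' :
      ρ2 x = ‖γ‖ / x + ∑ i ∈ range (2 * k + 2), ‖w i‖ / x ^ (2 * k + 3 - i) := by
    rw [hρ2 x hx, show 2 * (k + 2) - 1 = 2 * k + 3 by omega]
    exact congrArg _ (sum_Icc_reflect (fun i j => ‖w i‖ / x ^ j) 2 (2 * k + 3))
  rw [hρ1', hρ2']
  exact block_gershgorin_trichotomy hψ heig hx
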